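/- Let (a_k)_{k ∈ ℕ} be real numbers with a₀ = a₁ = 0 and let g := Σ_k a_k X^k be the corresponding formal power series over ℝ. The exponential series E := Σ_{n ≥ 0} gⁿ/n! is a well-defined formal power series, and for every k ≥ 1 its k-th coefficient satisfies k!·(coefficient of X^k in E) = Σ_n (k!/(#OPⁿ(k))!)·∏_{j ∈ OPⁿ(k)} a_j, where the sum runs over all ordered partitions (compositions) OPⁿ(k) of k whose parts are all at least 2, and #OPⁿ(k) denotes the number of parts. -/

import Mathlib

open PowerSeries Finset

/-!
Expanding `gⁿ = g ⋯ g` gives `coeff k (gⁿ) = ∑ a_{l₁} ⋯ a_{lₙ}` over the tuples `(l₁, …, lₙ)`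
summing to `k`. Since `a₀ = 0`, only tuples with positive entries survive, i.e. compositions of
`k` into `n` parts; since `a₁ = 0`, only those with all parts at least `2` contribute. A
composition of `k` has at most `k` parts, so in degree `k` the exponential series stops at
`n = k`, and grouping the compositions by their number of parts turns `k! ∑ₙ coeff k (gⁿ) / n!`
into the stated sum.
-/
theorem PowerSeries.coeff_pow_eq_sum_piAntidiag {R : Type*} [CommSemiring R] (φ : R⟦X⟧)
    (n k : ℕ) :
    coeff k (φ ^ n) = ∑ l ∈ piAntidiag (univ : Finset (Fin n)) k, ∏ i, coeff (l i) φ := by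
  rw [← Fin.prod_const, coeff_prod, finsuppAntidiag, sum_map, ← sum_attach (piAntidiag _ _)]
  rfl

namespace Composition

theorem sum_piAntidiag_prod_eq_sum_prod_map_blocks {R : Type*} [CommSemiring R]
    (f : ℕ → R) (hf : f 0 = 0) (n k : ℕ) :
    ∑ l ∈ piAntidiag (univ : Finset (Fin n)) k, ∏ i, f (l i) =
      ∑ c : Composition k with c.length = n, (c.blocks.map f).prod := by
  have pos_of_prod_ne_zero {l : Fin n → ℕ} (hl : ∏ i, f (l i) ≠ 0) (i : Fin n) : 0 < l i :=
    Nat.pos_of_ne_zero fun h => hl (prod_eq_zero (mem_univ i) (by rw [h, hf]))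
  refine sum_bij_ne_zero
    (fun l hl hl0 => ⟨List.ofFn l, by simpa [List.mem_ofFn] using pos_of_prod_ne_zero hl0,
      by simpa [List.sum_ofFn] using hl⟩)
    (fun l _ _ => mem_filter.2 ⟨mem_univ _, List.length_ofFn⟩) ?_ ?_ ?_
  · intro l₁ _ _ l₂ _ _ h
    exact List.ofFn_injective (congrArg Composition.blocks h)
  · intro c hc hc0
    obtain rfl : c.length = n := (mem_filter.1 hc).2
    refine ⟨fun i => c.blocks[i], ?_, ?_, Composition.ext List.ofFn_getElem⟩
    · simp [c.blocks_sum]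
    · simpa [← List.prod_ofFn, ← List.map_ofFn, List.ofFn_getElem] using hc0
  · intro l _ _
    simp [List.map_ofFn, List.prod_ofFn]

theorem prod_map_blocks_eq_zero {M₀ : Type*} [MonoidWithZero M₀] {f : ℕ → M₀}
    (hf : f 1 = 0) {k : ℕ} {c : Composition k} (hc : ¬∀ j ∈ c.blocks, 2 ≤ j) :
    (c.blocks.map f).prod = 0 := by
  obtain ⟨j, hj, hj2⟩ := not_forall₂.mp hc
  obtain rfl : j = 1 := by have := c.one_le_blocks hj; omega
  exact List.prod_eq_zero (hf ▸ List.mem_map_of_mem hj)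

end Composition

theorem PowerSeries.coeff_mk_pow_eq_sum_compositions {R : Type*} [CommSemiring R] (f : ℕ → R)
    (hf : f 0 = 0) (n k : ℕ) :
    coeff k (mk f ^ n) = ∑ c : Composition k with c.length = n, (c.blocks.map f).prod := by
  simp only [coeff_pow_eq_sum_piAntidiag, coeff_mk]
  exact Composition.sum_piAntidiag_prod_eq_sum_prod_map_blocks f hf n k

theorem PowerSeries.coeff_mk_pow_eq_zero_of_lt {R : Type*} [CommSemiring R] {f : ℕ → R}
    (hf : f 0 = 0) {n k : ℕ} (hkn : k < n) : coeff k (mk f ^ n) = 0 := by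
  rw [coeff_mk_pow_eq_sum_compositions f hf]
  refine sum_eq_zero fun c hc => absurd c.length_le ?_
  rw [(mem_filter.1 hc).2]
  omega

theorem exp_series_coeff_compositions_general (a : ℕ → ℝ) (h0 : a 0 = 0) (h1 : a 1 = 0)
    (k : ℕ) :
    (∀ n : ℕ, k < n → PowerSeries.coeff k ((PowerSeries.mk a) ^ n) = 0) ∧
    (k.factorial : ℝ) *
        ∑ n ∈ Finset.range (k + 1),
          PowerSeries.coeff k ((PowerSeries.mk a) ^ n) / (n.factorial : ℝ) =
      ∑ c : Composition k,
        if ∀ j ∈ c.blocks, 2 ≤ j then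
          ((k.factorial : ℝ) / (c.length.factorial : ℝ)) * (c.blocks.map a).prod
        else 0 := by
  refine ⟨fun n => coeff_mk_pow_eq_zero_of_lt h0, ?_⟩
  have drop_ite (c : Composition k) (x : ℝ) :
      (if ∀ j ∈ c.blocks, 2 ≤ j then x * (c.blocks.map a).prod else 0) =
        x * (c.blocks.map a).prod :=
    ite_eq_left_iff.2 fun hc => by rw [Composition.prod_map_blocks_eq_zero h1 hc, mul_zero]
  simp only [drop_ite, coeff_mk_pow_eq_sum_compositions a h0, mul_sum, sum_div]
  rw [← sum_fiberwise_of_maps_to (g := Composition.length) (t := range (k + 1))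
    fun c _ => mem_range.2 (Nat.lt_succ_of_le c.length_le)]
  refine sum_congr rfl fun n _ => sum_congr rfl fun c hc => ?_
  rw [(mem_filter.1 hc).2]
  ring

/-- for a formal power series `g = Σ a_k X^k` with `a₀ = a₁ = 0`, the
exponential series `E = Σ gⁿ/n!` is well defined (in each degree `k` only the powers
`gⁿ` with `n ≤ k` contribute), and `k!` times its `k`-th coefficient equals the sum,
over all ordered partitions (compositions) of `k` whose parts are all at least `2`,
of `(k!/(number of parts)!)·∏_{j ∈ parts} a_j`. -/
theorem exp_series_coeff_compositions (a : ℕ → ℝ) (h0 : a 0 = 0) (h1 : a 1 = 0)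
    (k : ℕ) (hk : 1 ≤ k) :
    (∀ n : ℕ, k < n → PowerSeries.coeff k ((PowerSeries.mk a) ^ n) = 0) ∧
    (k.factorial : ℝ) *
        ∑ n ∈ Finset.range (k + 1),
          PowerSeries.coeff k ((PowerSeries.mk a) ^ n) / (n.factorial : ℝ) =
      ∑ c : Composition k,
        if ∀ j ∈ c.blocks, 2 ≤ j then
          ((k.factorial : ℝ) / (c.length.factorial : ℝ)) * (c.blocks.map a).prod
        else 0 :=
  exp_series_coeff_compositions_general a h0 h1 k
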